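/- Let 0 ≤ α < n, let σ and ω be positive locally finite Borel measures on ℝⁿ, and let 𝒟 be a dyadic grid. For Q ∈ 𝒟 set ‖P_Q^ω x‖²_{L²(ω)} := Σ_{J ∈ 𝒟, J ⊆ Q} ‖Δ_J^ω x‖²_{L²(ω)}. Define 𝒜₂^α(σ,ω) := sup_{Q∈𝒟} 𝒫^α(Q, 1_{ℝⁿ∖Q}σ) · ω(Q)/|Q|^{1−α/n}, A₂^{α,energy}(σ,ω) := sup_{Q∈𝒟} [‖P_Q^ω x‖²_{L²(ω)}/ℓ(Q)²] · σ(Q)/|Q|^{2(1−α/n)}, and the plugged energy constant 𝒜₂^{α,energy plug}(σ,ω) := sup_{Q∈𝒟} [‖P_Q^ω x‖²_{L²(ω)}/ℓ(Q)²] · 𝒫^α(Q,σ)/|Q|^{1−α/n}. Then 𝒜₂^{α,energy plug}(σ,ω) ≤ C · ( 𝒜₂^α(σ,ω) + A₂^{α,energy}(σ,ω) ), with C depending only on n and α; symmetrically, with σ and ω interchanged, 𝒜₂^{α,*,energy plug}(σ,ω) ≤ C · ( 𝒜₂^{α,*}(σ,ω) + A₂^{α,*,energy}(σ,ω) ). 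-/

import Mathlib

open MeasureTheory
open scoped ENNReal NNReal

noncomputable section

/-- An axis-parallel half-open cube in `ℝⁿ`, given by its corner `a` and side length `l`. -/
structure QCube (n : ℕ) where
  a : Fin n → ℝ
  l : ℝ

/-- The half-open cube as a subset of `ℝⁿ`. -/
def QCube.pts {n : ℕ} (Q : QCube n) : Set (EuclideanSpace ℝ (Fin n)) :=
  {x | ∀ i, Q.a i ≤ x i ∧ x i < Q.a i + Q.l}

/-- The center of a cube. -/
def QCube.center {n : ℕ} (Q : QCube n) : EuclideanSpace ℝ (Fin n) :=
  (EuclideanSpace.equiv (Fin n) ℝ).symm fun i => Q.a i + Q.l / 2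

/-- The dyadic child of a cube indexed by `e ∈ {0,1}ⁿ`. -/
def QCube.child {n : ℕ} (Q : QCube n) (e : Fin n → Bool) : QCube n :=
  ⟨fun i => Q.a i + (if e i then Q.l / 2 else 0), Q.l / 2⟩

/-- The dyadic grid on `ℝⁿ` obtained by translating the standard grid by `t`. -/
def dyadicGrid {n : ℕ} (t : Fin n → ℝ) : Set (QCube n) :=
  {Q | ∃ (k : ℤ) (m : Fin n → ℤ),
    Q = ⟨fun i => t i + (2:ℝ) ^ (-k) * (m i : ℝ), (2:ℝ) ^ (-k)⟩}

/-- `E_S^μ f`, the `μ`-average of `f` over `S` (junk value `0` when `μ(S)` is `0` or `∞`). -/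
def muAvg {n : ℕ} (μ : Measure (EuclideanSpace ℝ (Fin n)))
    (S : Set (EuclideanSpace ℝ (Fin n))) (f : EuclideanSpace ℝ (Fin n) → ℝ) : ℝ :=
  (μ S).toReal⁻¹ * ∫ x in S, f x ∂μ

/-- The martingale difference `Δ_I^μ f = Σ_{I' child of I} 1_{I'} E_{I'}^μ f − 1_I E_I^μ f`. -/
def mdiff {n : ℕ} (μ : Measure (EuclideanSpace ℝ (Fin n))) (I : QCube n)
    (f : EuclideanSpace ℝ (Fin n) → ℝ) (x : EuclideanSpace ℝ (Fin n)) : ℝ :=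
  (∑ e : Fin n → Bool,
      Set.indicator (I.child e).pts (fun _ => muAvg μ (I.child e).pts f) x)
    - Set.indicator I.pts (fun _ => muAvg μ I.pts f) x

/-- `‖Δ_I^μ x‖²_{L²(μ)} = Σᵢ ∫ (Δ_I^μ xᵢ)² dμ`, for the identity map `x` of `ℝⁿ`. -/
def energyTerm {n : ℕ} (μ : Measure (EuclideanSpace ℝ (Fin n))) (I : QCube n) : ℝ≥0∞ :=
  ∑ i : Fin n, ∫⁻ x, ENNReal.ofReal ((mdiff μ I (fun z => z i) x) ^ 2) ∂μ

/-- `‖P_Q^μ x‖²_{L²(μ)} = Σ_{J ∈ 𝒟, J ⊆ Q} ‖Δ_J^μ x‖²_{L²(μ)}`. -/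
def energySum {n : ℕ} (t : Fin n → ℝ) (μ : Measure (EuclideanSpace ℝ (Fin n)))
    (Q : QCube n) : ℝ≥0∞ :=
  ∑' J : {J : QCube n // J ∈ dyadicGrid t ∧ J.pts ⊆ Q.pts}, energyTerm μ (J : QCube n)

/-- The reproducing `α`-fractional Poisson integral
`𝒫^α(Q,μ) = ∫ (ℓ(Q)/(ℓ(Q)+|x−c_Q|)²)^{n−α} dμ(x)`, with side `t` and center `z`. -/
def reproPoisson {n : ℕ} (α t : ℝ) (z : EuclideanSpace ℝ (Fin n))
    (μ : Measure (EuclideanSpace ℝ (Fin n))) : ℝ≥0∞ :=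
  ∫⁻ x, ENNReal.ofReal ((t / (t + dist x z) ^ 2) ^ ((n : ℝ) - α)) ∂μ

/-- The one-tailed Muckenhoupt constant with holes
`𝒜₂^α(σ,ω) = sup_{Q∈𝒟} 𝒫^α(Q, 1_{ℝⁿ∖Q}σ) ω(Q)/|Q|^{1−α/n}`. -/
def A2tail (n : ℕ) (α : ℝ) (t : Fin n → ℝ)
    (σ ω : Measure (EuclideanSpace ℝ (Fin n))) : ℝ≥0∞ :=
  ⨆ Q ∈ dyadicGrid t,
    reproPoisson α Q.l Q.center (σ.restrict Q.ptsᶜ) * ω Q.pts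
      / (volume Q.pts) ^ (1 - α / (n : ℝ))

/-- The energy Muckenhoupt constant
`A₂^{α,energy}(σ,ω) = sup_{Q∈𝒟} [‖P_Q^ω x‖²/ℓ(Q)²] σ(Q)/|Q|^{2(1−α/n)}`. -/
def A2energy (n : ℕ) (α : ℝ) (t : Fin n → ℝ)
    (σ ω : Measure (EuclideanSpace ℝ (Fin n))) : ℝ≥0∞ :=
  ⨆ Q ∈ dyadicGrid t,
    energySum t ω Q / ENNReal.ofReal (Q.l ^ 2) * σ Q.pts
      / (volume Q.pts) ^ (2 * (1 - α / (n : ℝ)))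

/-- The plugged energy Muckenhoupt constant
`𝒜₂^{α,energy plug}(σ,ω) = sup_{Q∈𝒟} [‖P_Q^ω x‖²/ℓ(Q)²] 𝒫^α(Q,σ)/|Q|^{1−α/n}`. -/
def A2energyPlug (n : ℕ) (α : ℝ) (t : Fin n → ℝ)
    (σ ω : Measure (EuclideanSpace ℝ (Fin n))) : ℝ≥0∞ :=
  ⨆ Q ∈ dyadicGrid t,
    energySum t ω Q / ENNReal.ofReal (Q.l ^ 2) * reproPoisson α Q.l Q.center σ
      / (volume Q.pts) ^ (1 - α / (n : ℝ))

/-!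
On a cube `J`, both `E_J^ω xᵢ` and `E_{J'}^ω xᵢ` for the child `J'` containing `x` lie in the
range of `xᵢ` over `J`, so `|Δ_J^ω xᵢ| ≤ ℓ(J)` ω-a.e. and `‖Δ_J^ω x‖² ≤ n ℓ(J)² ω(J)`. The dyadic
subcubes of `Q` of a fixed generation `m` are disjoint and have `ℓ(J)² = 4⁻ᵐ ℓ(Q)²`, hence
`‖P_Q^ω x‖² ≤ 2n ℓ(Q)² ω(Q)`.

Split `𝒫^α(Q,σ)` into the parts of `σ` outside and inside `Q`. With the energy bound, the outside
part is controlled by `2n 𝒜₂^α`; on `Q` the Poisson kernel is at most `ℓ(Q)^{α-n}`, so the inside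
part is at most `σ(Q)/|Q|^{1-α/n}` and produces exactly the `A₂^{α,energy}` term.
-/

open Set

namespace QCube

variable {n : ℕ}

theorem pts_eq_preimage_pi (Q : QCube n) :
    Q.pts = WithLp.ofLp ⁻¹' univ.pi fun i => Ico (Q.a i) (Q.a i + Q.l) := by
  ext x
  simp [QCube.pts]

theorem measurableSet_pts (Q : QCube n) : MeasurableSet Q.pts := by
  rw [pts_eq_preimage_pi]
  exact (MeasurableSet.univ_pi fun _ => measurableSet_Ico).preimage (by fun_prop)

theorem volume_pts (Q : QCube n) : volume Q.pts = ENNReal.ofReal Q.l ^ n := by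
  rw [pts_eq_preimage_pi, (PiLp.volume_preserving_ofLp (Fin n)).measure_preimage
    (MeasurableSet.univ_pi fun _ => measurableSet_Ico).nullMeasurableSet, volume_pi_pi]
  simp [Real.volume_Ico]

theorem volume_pts_rpow (hn : n ≠ 0) (Q : QCube n) (α p : ℝ) :
    volume Q.pts ^ (p * (1 - α / n)) = (ENNReal.ofReal Q.l ^ ((n : ℝ) - α)) ^ p := by
  rw [Q.volume_pts, ← ENNReal.rpow_natCast, ← ENNReal.rpow_mul, ← ENNReal.rpow_mul]
  congr 1
  field_simp

theorem measure_pts_lt_top (μ : Measure (EuclideanSpace ℝ (Fin n))) [IsLocallyFiniteMeasure μ]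
    (Q : QCube n) : μ Q.pts < ∞ := by
  have hcpt : IsCompact ((EuclideanSpace.equiv (Fin n) ℝ) ⁻¹'
      univ.pi fun i => Icc (Q.a i) (Q.a i + Q.l)) :=
    (EuclideanSpace.equiv (Fin n) ℝ).toHomeomorph.isCompact_preimage.mpr
      (isCompact_univ_pi fun _ => isCompact_Icc)
  refine (measure_mono fun x hx => ?_).trans_lt hcpt.measure_lt_top
  exact fun i _ => Ico_subset_Icc_self (hx i)

theorem child_pts_subset (Q : QCube n) (e : Fin n → Bool) :
    (Q.child e).pts ⊆ Q.pts := by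
  intro x hx i
  obtain ⟨h₁, h₂⟩ := hx i
  dsimp only [QCube.child] at h₁ h₂
  split_ifs at h₁ h₂ <;> constructor <;> linarith

theorem mem_child_of_mem (Q : QCube n) {x : EuclideanSpace ℝ (Fin n)} (hx : x ∈ Q.pts) :
    x ∈ (Q.child fun i => decide (Q.a i + Q.l / 2 ≤ x i)).pts := by
  intro i
  simp only [QCube.child, decide_eq_true_eq]
  split_ifs with h <;> constructor <;> linarith [hx i]

theorem disjoint_child_pts (Q : QCube n) {e e' : Fin n → Bool} (he : e ≠ e') :
    Disjoint (Q.child e).pts (Q.child e').pts := by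
  obtain ⟨i, hi⟩ := Function.ne_iff.mp he
  refine disjoint_left.mpr fun x hx hx' => ?_
  have h := hx i
  have h' := hx' i
  simp only [QCube.child] at h h'
  cases hei : e i <;> cases hei' : e' i <;> simp_all <;> linarith

end QCube

theorem ae_measure_ne_zero_of_mem {α : Type*} [MeasurableSpace α] (μ : Measure α) (s : Set α) :
    ∀ᵐ x ∂μ, x ∈ s → μ s ≠ 0 := by
  by_cases hs : μ s = 0
  · filter_upwards [measure_eq_zero_iff_ae_notMem.mp hs] with x hx using fun h => absurd h hx
  · exact .of_forall fun _ _ => hs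

section MartingaleDifference

variable {n : ℕ} (μ : Measure (EuclideanSpace ℝ (Fin n)))

theorem muAvg_mem_Icc {S : Set (EuclideanSpace ℝ (Fin n))} (hS : MeasurableSet S)
    (h0 : μ S ≠ 0) (hfin : μ S ≠ ∞) {f : EuclideanSpace ℝ (Fin n) → ℝ}
    (hf : AEStronglyMeasurable f μ) {lo hi : ℝ} (hb : ∀ x ∈ S, f x ∈ Icc lo hi) :
    muAvg μ S f ∈ Icc lo hi := by
  have hbae : ∀ᵐ x ∂μ.restrict S, f x ∈ Icc lo hi := by
    filter_upwards [ae_restrict_mem hS] using hb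
  have hint : IntegrableOn f S μ :=
    Measure.integrableOn_of_bounded (M := max |lo| |hi|) hfin hf <| by
      filter_upwards [hbae] with x hx using abs_le_max_abs_abs hx.1 hx.2
  have := Convex.set_average_mem (convex_Icc lo hi) isClosed_Icc h0 hfin hbae hint
  rwa [setAverage_eq, smul_eq_mul, measureReal_def] at this

theorem mdiff_eq_zero_of_notMem (I : QCube n) (f : EuclideanSpace ℝ (Fin n) → ℝ)
    {x : EuclideanSpace ℝ (Fin n)} (hx : x ∉ I.pts) : mdiff μ I f x = 0 := by
  rw [mdiff, indicator_of_notMem hx, sub_zero]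
  exact Finset.sum_eq_zero fun e _ => indicator_of_notMem (fun h => hx (I.child_pts_subset e h)) _

theorem mdiff_eq_of_mem_child (I : QCube n) (f : EuclideanSpace ℝ (Fin n) → ℝ)
    {x : EuclideanSpace ℝ (Fin n)} {e : Fin n → Bool} (hx : x ∈ (I.child e).pts) :
    mdiff μ I f x = muAvg μ (I.child e).pts f - muAvg μ I.pts f := by
  rw [mdiff, indicator_of_mem (I.child_pts_subset e hx), Finset.sum_eq_single e,
    indicator_of_mem hx]
  · exact fun e' _ he' => indicator_of_notMem (disjoint_right.mp (I.disjoint_child_pts he') hx) _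
  · exact fun h => absurd (Finset.mem_univ e) h

variable [IsLocallyFiniteMeasure μ]

theorem ofReal_sq_mdiff_coord_le_ae (J : QCube n) (i : Fin n) :
    ∀ᵐ x ∂μ, ENNReal.ofReal (mdiff μ J (fun z => z i) x ^ 2)
      ≤ J.pts.indicator (fun _ => ENNReal.ofReal (J.l ^ 2)) x := by
  filter_upwards [ae_measure_ne_zero_of_mem μ J.pts,
    ae_all_iff.mpr fun e => ae_measure_ne_zero_of_mem μ (J.child e).pts] with x hJ hchild
  by_cases hx : x ∈ J.pts
  · have hxe := J.mem_child_of_mem hx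
    have hb : ∀ y ∈ J.pts, y i ∈ Icc (J.a i) (J.a i + J.l) :=
      fun y hy => ⟨(hy i).1, (hy i).2.le⟩
    have hJavg := muAvg_mem_Icc μ J.measurableSet_pts (hJ hx)
      (J.measure_pts_lt_top μ).ne (by fun_prop) hb
    have hchildavg := muAvg_mem_Icc μ (J.child _).measurableSet_pts (hchild _ hxe)
      ((J.child _).measure_pts_lt_top μ).ne (by fun_prop)
      fun y hy => hb y (J.child_pts_subset _ hy)
    rw [mdiff_eq_of_mem_child μ J _ hxe, indicator_of_mem hx]
    exact ENNReal.ofReal_le_ofReal <| sq_le_sq'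
      (by linarith [hJavg.2, hchildavg.1]) (by linarith [hJavg.1, hchildavg.2])
  · simp [mdiff_eq_zero_of_notMem μ J _ hx]

theorem energyTerm_le (J : QCube n) :
    energyTerm μ J ≤ n * ENNReal.ofReal (J.l ^ 2) * μ J.pts := by
  calc energyTerm μ J ≤ ∑ _i : Fin n, ENNReal.ofReal (J.l ^ 2) * μ J.pts := by
        refine Finset.sum_le_sum fun i _ => ?_
        rw [← lintegral_indicator_const J.measurableSet_pts]
        exact lintegral_mono_ae (ofReal_sq_mdiff_coord_le_ae μ J i)
    _ = n * ENNReal.ofReal (J.l ^ 2) * μ J.pts := by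
        rw [Finset.sum_const, Finset.card_univ, Fintype.card_fin, nsmul_eq_mul, mul_assoc]

end MartingaleDifference

section DyadicGrid

variable {n : ℕ} {t : Fin n → ℝ}

theorem QCube.l_le_of_pts_subset (hn : 0 < n) {J Q : QCube n} (hJ : 0 < J.l)
    (hsub : J.pts ⊆ Q.pts) : J.l ≤ Q.l := by
  let i : Fin n := ⟨0, hn⟩
  have hcorner : WithLp.toLp 2 J.a ∈ Q.pts := hsub fun j => ⟨le_rfl, by simpa using hJ⟩
  have hQ : 0 ≤ Q.l := by linarith [hcorner i]
  by_contra! hlt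
  have hfar : WithLp.toLp 2 (Function.update J.a i (J.a i + Q.l)) ∈ Q.pts := hsub fun j => by
    rcases eq_or_ne j i with rfl | hj
    · simp only [Function.update_self]
      constructor <;> linarith
    · simpa [Function.update_of_ne hj] using hJ
  have := (hfar i).2
  simp only [Function.update_self] at this
  linarith [(hcorner i).1]

theorem l_pos_of_mem_dyadicGrid {Q : QCube n} (hQ : Q ∈ dyadicGrid t) : 0 < Q.l := by
  obtain ⟨k, m, rfl⟩ := hQ
  exact zpow_pos two_pos _

theorem exists_l_eq_of_mem_dyadicGrid (hn : 0 < n) {J Q : QCube n} (hJ : J ∈ dyadicGrid t)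
    (hQ : Q ∈ dyadicGrid t) (hsub : J.pts ⊆ Q.pts) : ∃ m : ℕ, J.l = Q.l * 2⁻¹ ^ m := by
  have hle := QCube.l_le_of_pts_subset hn (l_pos_of_mem_dyadicGrid hJ) hsub
  obtain ⟨kJ, mJ, rfl⟩ := hJ
  obtain ⟨kQ, mQ, rfl⟩ := hQ
  have hk : kQ ≤ kJ := by
    have := (zpow_le_zpow_iff_right₀ one_lt_two).mp hle
    omega
  refine ⟨(kJ - kQ).toNat, ?_⟩
  simp only
  rw [← zpow_natCast, Int.toNat_of_nonneg (by omega), inv_zpow', ← zpow_add₀ two_ne_zero]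
  congr 1
  ring

theorem mem_dyadicCube_iff {s : ℝ} (hs : 0 < s) (m : Fin n → ℤ) (x : EuclideanSpace ℝ (Fin n)) :
    x ∈ (⟨fun i => t i + s * m i, s⟩ : QCube n).pts ↔ ∀ i, ⌊(x i - t i) / s⌋ = m i := by
  refine forall_congr' fun i => ?_
  rw [Int.floor_eq_iff, le_div_iff₀ hs, div_lt_iff₀ hs]
  constructor <;> rintro ⟨h₁, h₂⟩ <;> constructor <;> linarith

theorem disjoint_pts_of_mem_dyadicGrid {J₁ J₂ : QCube n} (h₁ : J₁ ∈ dyadicGrid t)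
    (h₂ : J₂ ∈ dyadicGrid t) (hl : J₁.l = J₂.l) (hne : J₁ ≠ J₂) : Disjoint J₁.pts J₂.pts := by
  obtain ⟨k₁, m₁, rfl⟩ := h₁
  obtain ⟨k₂, m₂, rfl⟩ := h₂
  obtain rfl : k₁ = k₂ := by
    simpa using zpow_right_injective₀ two_pos (by norm_num : (2:ℝ) ≠ 1) hl
  refine disjoint_left.mpr fun x hx₁ hx₂ => hne ?_
  rw [mem_dyadicCube_iff (zpow_pos two_pos _)] at hx₁ hx₂
  obtain rfl : m₁ = m₂ := funext fun i => (hx₁ i).symm.trans (hx₂ i)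
  rfl

end DyadicGrid

theorem tsum_pow_mul_measure_le {ι α : Type*} [MeasurableSpace α] (μ : Measure α)
    {s : ι → Set α} {T : Set α} (g : ι → ℕ) (r : ℝ≥0∞) (hs : ∀ i, MeasurableSet (s i))
    (hsT : ∀ i, s i ⊆ T) (hdisj : ∀ i j, g i = g j → i ≠ j → Disjoint (s i) (s j)) :
    ∑' i, r ^ g i * μ (s i) ≤ (∑' m, r ^ m) * μ T := by
  rw [← (Equiv.sigmaFiberEquiv g).tsum_eq, ENNReal.tsum_sigma', ← ENNReal.tsum_mul_right]
  refine ENNReal.tsum_le_tsum fun m => ?_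
  simp only [Equiv.sigmaFiberEquiv_apply]
  calc ∑' i : {i // g i = m}, r ^ g i * μ (s i) = r ^ m * ∑' i : {i // g i = m}, μ (s i) := by
        rw [← ENNReal.tsum_mul_left]
        exact tsum_congr fun i => by rw [i.2]
    _ ≤ r ^ m * μ T := by
        gcongr
        calc ∑' i : {i // g i = m}, μ (s i) ≤ μ (⋃ i : {i // g i = m}, s i) :=
              tsum_meas_le_meas_iUnion_of_disjoint μ (fun i => hs i) fun i j hij =>
                hdisj i j (i.2.trans j.2.symm) (Subtype.coe_injective.ne hij)
          _ ≤ μ T := measure_mono (iUnion_subset fun i => hsT i)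

theorem tsum_inv_four_pow_le_two : ∑' m : ℕ, (4 : ℝ≥0∞)⁻¹ ^ m ≤ 2 :=
  calc ∑' m : ℕ, (4 : ℝ≥0∞)⁻¹ ^ m ≤ ∑' m : ℕ, (2 : ℝ≥0∞)⁻¹ ^ m :=
        ENNReal.tsum_le_tsum fun m => pow_le_pow_left' (ENNReal.inv_le_inv.mpr (by norm_num)) m
    _ = 2 := by rw [ENNReal.tsum_geometric, ENNReal.one_sub_inv_two, inv_inv]

theorem energySum_le {n : ℕ} (hn : 0 < n) (t : Fin n → ℝ)
    (ω : Measure (EuclideanSpace ℝ (Fin n))) [IsLocallyFiniteMeasure ω] {Q : QCube n}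
    (hQ : Q ∈ dyadicGrid t) :
    energySum t ω Q ≤ 2 * n * ENNReal.ofReal (Q.l ^ 2) * ω Q.pts := by
  choose g hg using fun J : {J : QCube n // J ∈ dyadicGrid t ∧ J.pts ⊆ Q.pts} =>
    exists_l_eq_of_mem_dyadicGrid hn J.2.1 hQ J.2.2
  have hterm : ∀ J,
      energyTerm ω J.1 ≤ n * ENNReal.ofReal (Q.l ^ 2) * ((4⁻¹) ^ g J * ω J.1.pts) := by
    intro J
    have hsq : J.1.l ^ 2 = Q.l ^ 2 * 4⁻¹ ^ g J := by
      rw [hg J, mul_pow, ← pow_mul, mul_comm (g J) 2, pow_mul]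
      norm_num
    calc energyTerm ω J.1 ≤ n * ENNReal.ofReal (J.1.l ^ 2) * ω J.1.pts := energyTerm_le ω J.1
      _ = n * ENNReal.ofReal (Q.l ^ 2) * ((4⁻¹) ^ g J * ω J.1.pts) := by
        rw [hsq, ENNReal.ofReal_mul (sq_nonneg _),
          ENNReal.ofReal_pow (by norm_num : (0 : ℝ) ≤ 4⁻¹),
          ENNReal.ofReal_inv_of_pos (by norm_num), ENNReal.ofReal_ofNat]
        ring
  have hdisj : ∀ J₁ J₂, g J₁ = g J₂ → J₁ ≠ J₂ → Disjoint J₁.1.pts J₂.1.pts :=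
    fun J₁ J₂ hg₁₂ hne => disjoint_pts_of_mem_dyadicGrid J₁.2.1 J₂.2.1
      (by rw [hg J₁, hg J₂, hg₁₂]) (Subtype.coe_injective.ne hne)
  calc energySum t ω Q
      ≤ ∑' J, n * ENNReal.ofReal (Q.l ^ 2) * ((4⁻¹) ^ g J * ω J.1.pts) :=
        ENNReal.tsum_le_tsum hterm
    _ ≤ n * ENNReal.ofReal (Q.l ^ 2) * ((∑' m : ℕ, (4 : ℝ≥0∞)⁻¹ ^ m) * ω Q.pts) := by
        rw [ENNReal.tsum_mul_left]
        gcongr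
        exact tsum_pow_mul_measure_le ω g _ (fun J => J.1.measurableSet_pts)
          (fun J => J.2.2) hdisj
    _ ≤ 2 * n * ENNReal.ofReal (Q.l ^ 2) * ω Q.pts := by
        calc _ ≤ n * ENNReal.ofReal (Q.l ^ 2) * (2 * ω Q.pts) := by
              gcongr
              exact tsum_inv_four_pow_le_two
          _ = 2 * n * ENNReal.ofReal (Q.l ^ 2) * ω Q.pts := by ring

section Poisson

variable {n : ℕ} {α : ℝ}

theorem reproPoisson_eq_add_restrict (l : ℝ) (z : EuclideanSpace ℝ (Fin n))
    (σ : Measure (EuclideanSpace ℝ (Fin n))) {S : Set (EuclideanSpace ℝ (Fin n))}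
    (hS : MeasurableSet S) :
    reproPoisson α l z σ
      = reproPoisson α l z (σ.restrict Sᶜ) + reproPoisson α l z (σ.restrict S) := by
  rw [reproPoisson, reproPoisson, reproPoisson, ← lintegral_add_measure,
    Measure.restrict_compl_add_restrict hS]

theorem reproPoisson_le_div (hα : α ≤ n) {l : ℝ} (hl : 0 < l) (z : EuclideanSpace ℝ (Fin n))
    (μ : Measure (EuclideanSpace ℝ (Fin n))) :
    reproPoisson α l z μ ≤ μ univ / ENNReal.ofReal l ^ ((n : ℝ) - α) := by
  have hkernel : ∀ x, l / (l + dist x z) ^ 2 ≤ l⁻¹ := fun x => by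
    rw [div_le_iff₀ (by positivity), inv_mul_eq_div, le_div_iff₀ hl]
    nlinarith [dist_nonneg (x := x) (y := z)]
  calc reproPoisson α l z μ ≤ ∫⁻ _, ENNReal.ofReal (l⁻¹ ^ ((n : ℝ) - α)) ∂μ :=
        lintegral_mono fun x => ENNReal.ofReal_le_ofReal <|
          Real.rpow_le_rpow (by positivity) (hkernel x) (sub_nonneg.mpr hα)
    _ = μ univ / ENNReal.ofReal l ^ ((n : ℝ) - α) := by
        rw [lintegral_const, ← ENNReal.ofReal_rpow_of_pos (inv_pos.mpr hl),
          ENNReal.ofReal_inv_of_pos hl, ENNReal.inv_rpow, mul_comm, div_eq_mul_inv]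

theorem reproPoisson_le_add_div (hα : α ≤ n) {l : ℝ} (hl : 0 < l)
    (z : EuclideanSpace ℝ (Fin n)) (σ : Measure (EuclideanSpace ℝ (Fin n)))
    {S : Set (EuclideanSpace ℝ (Fin n))} (hS : MeasurableSet S) :
    reproPoisson α l z σ
      ≤ reproPoisson α l z (σ.restrict Sᶜ) + σ S / ENNReal.ofReal l ^ ((n : ℝ) - α) := by
  rw [reproPoisson_eq_add_restrict l z σ hS]
  gcongr
  simpa using reproPoisson_le_div hα hl z (σ.restrict S)

end Poisson

theorem A2energyPlug_le {n : ℕ} (hn : 0 < n) {α : ℝ} (hα : α ≤ n) (t : Fin n → ℝ)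
    (σ ω : Measure (EuclideanSpace ℝ (Fin n))) [IsLocallyFiniteMeasure ω] :
    A2energyPlug n α t σ ω
      ≤ ENNReal.ofReal (2 * n) * (A2tail n α t σ ω + A2energy n α t σ ω) := by
  refine iSup₂_le fun Q hQ => ?_
  have hl := l_pos_of_mem_dyadicGrid hQ
  set D := ENNReal.ofReal Q.l ^ ((n : ℝ) - α)
  set E := energySum t ω Q / ENNReal.ofReal (Q.l ^ 2)
  set Pout := reproPoisson α Q.l Q.center (σ.restrict Q.ptsᶜ)
  have hvol : volume Q.pts ^ (1 - α / n) = D := by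
    simpa using Q.volume_pts_rpow hn.ne' α 1
  have hvol₂ : volume Q.pts ^ (2 * (1 - α / n)) = D ^ 2 := by
    simpa using Q.volume_pts_rpow hn.ne' α 2
  have hE : E ≤ 2 * n * ω Q.pts := ENNReal.div_le_of_le_mul <| by
    calc energySum t ω Q ≤ 2 * n * ENNReal.ofReal (Q.l ^ 2) * ω Q.pts := energySum_le hn t ω hQ
      _ = 2 * n * ω Q.pts * ENNReal.ofReal (Q.l ^ 2) := by ring
  have hP : reproPoisson α Q.l Q.center σ ≤ Pout + σ Q.pts / D :=
    reproPoisson_le_add_div hα hl Q.center σ Q.measurableSet_pts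
  have htail : Pout * ω Q.pts / D ≤ A2tail n α t σ ω := by
    rw [← hvol]
    exact le_iSup₂ (f := fun Q (_ : Q ∈ dyadicGrid t) => reproPoisson α Q.l Q.center
      (σ.restrict Q.ptsᶜ) * ω Q.pts / volume Q.pts ^ (1 - α / (n : ℝ))) Q hQ
  have henergy : E * σ Q.pts / D ^ 2 ≤ A2energy n α t σ ω := by
    rw [← hvol₂]
    exact le_iSup₂ (f := fun Q (_ : Q ∈ dyadicGrid t) => energySum t ω Q
      / ENNReal.ofReal (Q.l ^ 2) * σ Q.pts / volume Q.pts ^ (2 * (1 - α / (n : ℝ)))) Q hQ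
  calc E * reproPoisson α Q.l Q.center σ / volume Q.pts ^ (1 - α / n)
      ≤ E * (Pout + σ Q.pts / D) / D := by rw [hvol]; gcongr
    _ = E * Pout / D + E * σ Q.pts / D ^ 2 := by
        simp only [div_eq_mul_inv, ENNReal.inv_pow]
        ring
    _ ≤ 2 * n * ω Q.pts * Pout / D + E * σ Q.pts / D ^ 2 := by gcongr
    _ ≤ 2 * n * A2tail n α t σ ω + A2energy n α t σ ω := by
        rw [mul_assoc, mul_comm (ω Q.pts), mul_div_assoc]
        gcongr
    _ ≤ ENNReal.ofReal (2 * n) * (A2tail n α t σ ω + A2energy n α t σ ω) := by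
        have h1 : (1 : ℝ≥0∞) ≤ 2 * n :=
          one_le_two.trans (le_mul_of_one_le_right' (Nat.one_le_cast.mpr hn))
        rw [ENNReal.ofReal_mul zero_le_two, ENNReal.ofReal_ofNat, ENNReal.ofReal_natCast, mul_add]
        gcongr
        exact le_mul_of_one_le_left' h1

theorem statement19_general (n : ℕ) (α : ℝ) (hn : 1 ≤ n) (hαn : α < n) :
    ∃ C : ℝ, 0 < C ∧
      ∀ (t : Fin n → ℝ) (σ ω : Measure (EuclideanSpace ℝ (Fin n))),
        IsLocallyFiniteMeasure σ → IsLocallyFiniteMeasure ω →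
        A2energyPlug n α t σ ω
            ≤ ENNReal.ofReal C * (A2tail n α t σ ω + A2energy n α t σ ω) ∧
        A2energyPlug n α t ω σ
            ≤ ENNReal.ofReal C * (A2tail n α t ω σ + A2energy n α t ω σ) :=
  ⟨2 * n, mul_pos two_pos (Nat.cast_pos.mpr hn), fun t σ ω _ _ =>
    ⟨A2energyPlug_le hn hαn.le t σ ω, A2energyPlug_le hn hαn.le t ω σ⟩⟩

/-- The plugged energy Muckenhoupt constant is controlled by the
one-tailed constant with holes plus the energy constant:
`𝒜₂^{α,energy plug}(σ,ω) ≤ C (𝒜₂^α(σ,ω) + A₂^{α,energy}(σ,ω))` with `C = C(n,α)`;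
symmetrically with `σ` and `ω` interchanged. -/
theorem statement19 (n : ℕ) (α : ℝ) (hn : 1 ≤ n) (hα0 : 0 ≤ α) (hαn : α < n) :
    ∃ C : ℝ, 0 < C ∧
      ∀ (t : Fin n → ℝ) (σ ω : Measure (EuclideanSpace ℝ (Fin n))),
        IsLocallyFiniteMeasure σ → IsLocallyFiniteMeasure ω →
        A2energyPlug n α t σ ω
            ≤ ENNReal.ofReal C * (A2tail n α t σ ω + A2energy n α t σ ω) ∧
        A2energyPlug n α t ω σ
            ≤ ENNReal.ofReal C * (A2tail n α t ω σ + A2energy n α t ω σ) :=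
  statement19_general n α hn hαn
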